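/- arXiv:0905.2155 — 3 statements merged into one kernel-verified Lean document; each statement's English description precedes it below -/
import Mathlib

section
/- For q > 0 and c ∈ ℝ, with H_q(x) = ∫₀^∞ e^{-xz - z²/2} z^{q-1} dz, one has ∫_c^∞ (e^{-x²/2}/√(2π)) · H_{2q}(x) dx = (e^{-c²/2}/(√(2π)·2q)) · H_{2q+1}(c). -/
/-!
Since `exp (-x²/2) * exp (-x z - z²/2) = exp (-(x + z)²/2)`, the left side is the integral of
`exp (-(x + z)²/2) z^(2q-1)` over `x > c`, `z > 0`. All integrands are nonnegative, so Tonelli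
applies: substituting `w = x - c + z` and integrating first in `z ∈ (0, w)` turns `z^(2q-1)` into
`w^(2q)/(2q)`, leaving `∫_{w>0} exp (-(c + w)²/2) w^(2q)/(2q) dw`, which is
`exp (-c²/2) H_{2q+1}(c)/(2q)` by the same identity.
-/

open MeasureTheory Real Set
open scoped ENNReal

/-- `H q x = ∫₀^∞ exp (-x z - z²/2) z^(q-1) dz`. -/
noncomputable def H (q x : ℝ) : ℝ :=
  ∫ z in Set.Ioi (0:ℝ), Real.exp (-x * z - z ^ 2 / 2) * z ^ (q - 1)

theorem setLIntegral_Ioi_comp_add_right (f : ℝ → ℝ≥0∞) (a b : ℝ) :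
    ∫⁻ x in Ioi a, f (x + b) = ∫⁻ x in Ioi (a + b), f x := by
  have h := (measurePreserving_add_right volume b).setLIntegral_comp_preimage_emb
    (measurableEmbedding_addRight b) f (Ioi (a + b))
  rwa [preimage_add_const_Ioi, add_sub_cancel_right] at h

theorem lintegral_Ioi_lintegral_Ioi_comp_add_mul {f g : ℝ → ℝ≥0∞} (hf : Measurable f)
    (hg : Measurable g) :
    ∫⁻ y in Ioi 0, ∫⁻ z in Ioi 0, f (y + z) * g z
      = ∫⁻ w in Ioi 0, f w * ∫⁻ z in Ioo 0 w, g z := by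
  set F : ℝ → ℝ → ℝ≥0∞ := fun z w => if z < w then f w * g z else 0
  have hF : Measurable (Function.uncurry F) :=
    Measurable.ite (measurableSet_lt measurable_fst measurable_snd)
      ((hf.comp measurable_snd).mul (hg.comp measurable_fst)) measurable_const
  calc ∫⁻ y in Ioi 0, ∫⁻ z in Ioi 0, f (y + z) * g z
      = ∫⁻ z in Ioi 0, ∫⁻ y in Ioi 0, f (y + z) * g z :=
        lintegral_lintegral_swap (by fun_prop)
    _ = ∫⁻ z in Ioi 0, ∫⁻ w in Ioi 0, F z w := by
        refine setLIntegral_congr_fun measurableSet_Ioi fun z hz => ?_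
        rw [setLIntegral_Ioi_comp_add_right (fun w => f w * g z), zero_add,
          ← lintegral_indicator measurableSet_Ioi, ← lintegral_indicator measurableSet_Ioi]
        congr 1 with w
        by_cases hw : z < w
        · simp [F, hw, (mem_Ioi.1 hz).trans hw]
        · simp [F, indicator_apply, hw]
    _ = ∫⁻ w in Ioi 0, ∫⁻ z in Ioi 0, F z w :=
        lintegral_lintegral_swap hF.aemeasurable
    _ = ∫⁻ w in Ioi 0, f w * ∫⁻ z in Ioo 0 w, g z := by
        refine setLIntegral_congr_fun measurableSet_Ioi fun w _ => ?_
        rw [← lintegral_const_mul _ hg, ← Ioi_inter_Iio, inter_comm,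
          ← Measure.restrict_restrict measurableSet_Iio, ← lintegral_indicator measurableSet_Iio]
        rfl

theorem lintegral_Ioo_ofReal_rpow_sub_one {p : ℝ} (hp : 0 < p) {t : ℝ} (ht : 0 ≤ t) :
    ∫⁻ z in Ioo 0 t, ENNReal.ofReal (z ^ (p - 1)) = ENNReal.ofReal (t ^ p / p) := by
  have hint : IntervalIntegrable (fun z : ℝ => z ^ (p - 1)) volume 0 t :=
    intervalIntegral.intervalIntegrable_rpow' (by linarith)
  rw [← ofReal_integral_eq_lintegral_ofReal (hint.1.mono_set Ioo_subset_Ioc_self),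
    ← integral_Ioc_eq_integral_Ioo, ← intervalIntegral.integral_of_le ht, integral_rpow (by simpa),
    sub_add_cancel, zero_rpow hp.ne', sub_zero]
  filter_upwards [ae_restrict_mem measurableSet_Ioo] with z hz
  exact rpow_nonneg hz.1.le _

theorem exp_neg_sq_half_mul_H (p x : ℝ) :
    exp (-x ^ 2 / 2) * H p x = ∫ z in Ioi 0, exp (-(x + z) ^ 2 / 2) * z ^ (p - 1) := by
  rw [H, ← integral_const_mul]
  congr 1 with z
  rw [← mul_assoc, ← exp_add]
  ring_nf

theorem integrableOn_exp_neg_add_sq_half_mul_rpow {p : ℝ} (hp : 0 < p) (x : ℝ) :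
    IntegrableOn (fun z => exp (-(x + z) ^ 2 / 2) * z ^ (p - 1)) (Ioi 0) := by
  have hbound (z : ℝ) : ‖exp (-(x + z) ^ 2 / 2 + z)‖ ≤ exp (1 / 2 - x) := by
    rw [norm_of_nonneg (exp_pos _).le, exp_le_exp]
    nlinarith [sq_nonneg (x + z - 1)]
  refine IntegrableOn.congr_fun ((GammaIntegral_convergent hp).bdd_mul (by fun_prop)
    (ae_of_all _ hbound)) (fun z _ => ?_) measurableSet_Ioi
  rw [← mul_assoc, ← exp_add, add_neg_cancel_right]

theorem integral_Ioi_exp_neg_sq_half_mul_H {p : ℝ} (hp : 0 < p) (c : ℝ) :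
    ∫ x in Ioi c, exp (-x ^ 2 / 2) * H p x = exp (-c ^ 2 / 2) * H (p + 1) c / p := by
  set L : ℝ → ℝ≥0∞ := fun x => ∫⁻ z in Ioi 0, ENNReal.ofReal (exp (-(x + z) ^ 2 / 2) * z ^ (p - 1))
  have hL (x : ℝ) : exp (-x ^ 2 / 2) * H p x = (L x).toReal := by
    rw [exp_neg_sq_half_mul_H, integral_eq_lintegral_of_nonneg_ae _ (by fun_prop)]
    filter_upwards [ae_restrict_mem measurableSet_Ioi] with z hz
    exact mul_nonneg (exp_pos _).le (rpow_nonneg (le_of_lt hz) _)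
  have hL_lt_top (x : ℝ) : L x < ∞ :=
    (integrableOn_exp_neg_add_sq_half_mul_rpow hp x).lintegral_lt_top
  have hL_meas : Measurable L := Measurable.lintegral_prod_right'
    (f := fun v : ℝ × ℝ => ENNReal.ofReal (exp (-(v.1 + v.2) ^ 2 / 2) * v.2 ^ (p - 1)))
    (by fun_prop)
  calc ∫ x in Ioi c, exp (-x ^ 2 / 2) * H p x
      = ∫ x in Ioi c, (L x).toReal := by simp_rw [hL]
    _ = (∫⁻ x in Ioi c, L x).toReal := integral_toReal hL_meas.aemeasurable (ae_of_all _ hL_lt_top)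
    _ = (∫⁻ y in Ioi 0, ∫⁻ z in Ioi 0, ENNReal.ofReal (exp (-(c + (y + z)) ^ 2 / 2))
          * ENNReal.ofReal (z ^ (p - 1))).toReal := by
        have h := setLIntegral_Ioi_comp_add_right L 0 c
        rw [zero_add] at h
        refine congrArg _ (h.symm.trans (setLIntegral_congr_fun measurableSet_Ioi fun y _ => ?_))
        refine lintegral_congr fun z => ?_
        rw [add_comm y c, add_assoc, ← ENNReal.ofReal_mul (exp_pos _).le]
    _ = (∫⁻ w in Ioi 0, ENNReal.ofReal (exp (-(c + w) ^ 2 / 2) * (w ^ p / p))).toReal := by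
        rw [lintegral_Ioi_lintegral_Ioi_comp_add_mul
          (f := fun w => ENNReal.ofReal (exp (-(c + w) ^ 2 / 2))) (by fun_prop) (by fun_prop)]
        refine congrArg _ (setLIntegral_congr_fun measurableSet_Ioi fun w hw => ?_)
        rw [lintegral_Ioo_ofReal_rpow_sub_one hp (le_of_lt hw), ENNReal.ofReal_mul (exp_pos _).le]
    _ = ∫ w in Ioi 0, exp (-(c + w) ^ 2 / 2) * (w ^ p / p) := by
        rw [integral_eq_lintegral_of_nonneg_ae _ (by fun_prop)]
        filter_upwards [ae_restrict_mem measurableSet_Ioi] with w hw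
        exact mul_nonneg (exp_pos _).le (div_nonneg (rpow_nonneg (le_of_lt hw) _) hp.le)
    _ = exp (-c ^ 2 / 2) * H (p + 1) c / p := by
        simp_rw [exp_neg_sq_half_mul_H, add_sub_cancel_right, mul_div_assoc', integral_div]

theorem integral_gaussian_H (q : ℝ) (hq : 0 < q) (c : ℝ) :
    ∫ x in Set.Ioi c, Real.exp (-x ^ 2 / 2) / Real.sqrt (2 * Real.pi) * H (2 * q) x
      = Real.exp (-c ^ 2 / 2) / (Real.sqrt (2 * Real.pi) * (2 * q)) * H (2 * q + 1) c := by
  simp_rw [div_mul_eq_mul_div, integral_div,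
    integral_Ioi_exp_neg_sq_half_mul_H (by positivity : 0 < 2 * q)]
  ring
end

section
/- If σ-fields G₁ and G₂ are conditionally independent given H on a probability space, and G₁' ⊆ G₁ is a sub-σ-field, then G₁ and G₂ are conditionally independent given σ(H, G₁'). -/
open MeasureTheory ProbabilityTheory MeasurableSpace Set

/-
Doob's characterization: `G₁` and `G₂` are conditionally independent given `H` iff, for every
`B ∈ G₂`, conditioning `1_B` on `H ⊔ G₁` gives the same result as conditioning on `H` alone.
Since `H ≤ H ⊔ G₁' ≤ H ⊔ G₁`, the tower property then forces `μ⟦B | H ⊔ G₁'⟧ = μ⟦B | H⟧`,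
and `(H ⊔ G₁') ⊔ G₁ = H ⊔ G₁`, so the characterization applies to `H ⊔ G₁'` as well.
-/

namespace ProbabilityTheory

variable {Ω : Type*} {mΩ : MeasurableSpace Ω} {μ : Measure Ω}

lemma indicator_one_mul (s : Set Ω) (g : Ω → ℝ) :
    s.indicator (fun _ ↦ (1 : ℝ)) * g = s.indicator g := by
  ext ω
  by_cases hω : ω ∈ s <;> simp [hω]

lemma isPiSystem_image2_inter (m₁ m₂ : MeasurableSpace Ω) :
    IsPiSystem (image2 (· ∩ ·) {s | MeasurableSet[m₁] s} {t | MeasurableSet[m₂] t}) := by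
  rintro _ ⟨s₁, hs₁, t₁, ht₁, rfl⟩ _ ⟨s₂, hs₂, t₂, ht₂, rfl⟩ -
  exact ⟨s₁ ∩ s₂, hs₁.inter hs₂, t₁ ∩ t₂, ht₁.inter ht₂, inter_inter_inter_comm ..⟩

lemma sup_eq_generateFrom_image2_inter (m₁ m₂ : MeasurableSpace Ω) :
    m₁ ⊔ m₂ = generateFrom (image2 (· ∩ ·) {s | MeasurableSet[m₁] s} {t | MeasurableSet[m₂] t}) := by
  refine le_antisymm (sup_le ?_ ?_) (generateFrom_le ?_)
  · exact fun s hs ↦ measurableSet_generateFrom ⟨s, hs, univ, .univ, inter_univ s⟩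
  · exact fun t ht ↦ measurableSet_generateFrom ⟨univ, .univ, t, ht, univ_inter t⟩
  · rintro _ ⟨s, hs, t, ht, rfl⟩
    exact (le_sup_left (b := m₂) s hs).inter (le_sup_right (a := m₁) t ht)

lemma setIntegral_eq_of_isPiSystem {E : Type*} [NormedAddCommGroup E] [NormedSpace ℝ E]
    {m : MeasurableSpace Ω} (hm : m ≤ mΩ) {p : Set (Set Ω)} (h_eq : m = generateFrom p)
    (h_inter : IsPiSystem p) (h_univ : univ ∈ p) {f g : Ω → E} (hf : Integrable f μ)
    (hg : Integrable g μ) (basic : ∀ t ∈ p, ∫ x in t, f x ∂μ = ∫ x in t, g x ∂μ)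
    {s : Set Ω} (hs : MeasurableSet[m] s) :
    ∫ x in s, f x ∂μ = ∫ x in s, g x ∂μ := by
  induction s, hs using induction_on_inter h_eq h_inter with
  | empty => simp
  | basic t ht => exact basic t ht
  | compl t ht h_t =>
    rw [setIntegral_compl (hm t ht) hf, setIntegral_compl (hm t ht) hg, h_t,
      ← setIntegral_univ (f := f), basic _ h_univ, setIntegral_univ]
  | iUnion t hdisj htm h_t =>
    rw [integral_iUnion (fun n ↦ hm _ (htm n)) hdisj hf.integrableOn,
      integral_iUnion (fun n ↦ hm _ (htm n)) hdisj hg.integrableOn]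
    exact tsum_congr h_t

variable [IsFiniteMeasure μ]

lemma condExp_indicator_mul_ae_eq {m : MeasurableSpace Ω} {s : Set Ω} {g : Ω → ℝ}
    (hs : MeasurableSet[mΩ] s) (hg : StronglyMeasurable[m] g) (hgi : Integrable g μ) :
    μ[s.indicator g | m] =ᵐ[μ] μ⟦s | m⟧ * g := by
  rw [← indicator_one_mul]
  refine condExp_mul_of_stronglyMeasurable_right hg ?_ ((integrable_const 1).indicator hs)
  rw [indicator_one_mul]
  exact hgi.indicator hs

lemma condExp_ae_eq_of_le_of_le {E : Type*} [NormedAddCommGroup E] [NormedSpace ℝ E]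
    [CompleteSpace E] {m₁ m m₂ : MeasurableSpace Ω} (h₁ : m₁ ≤ m) (h₂ : m ≤ m₂) (hm₂ : m₂ ≤ mΩ)
    {f : Ω → E} (hf : μ[f | m₂] =ᵐ[μ] μ[f | m₁]) :
    μ[f | m] =ᵐ[μ] μ[f | m₁] :=
  calc μ[f | m] =ᵐ[μ] μ[μ[f | m₂] | m] := (condExp_condExp_of_le h₂ hm₂).symm
    _ =ᵐ[μ] μ[μ[f | m₁] | m] := condExp_congr_ae hf
    _ = μ[f | m₁] := condExp_of_stronglyMeasurable (h₂.trans hm₂)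
      (stronglyMeasurable_condExp.mono h₁) integrable_condExp

variable [StandardBorelSpace Ω]

lemma CondIndep.condExp_indicator_sup_ae_eq {H G₁ G₂ : MeasurableSpace Ω} (hH : H ≤ mΩ)
    (hG₁ : G₁ ≤ mΩ) (hG₂ : G₂ ≤ mΩ) (h : CondIndep H G₁ G₂ hH μ) {B : Set Ω}
    (hB : MeasurableSet[G₂] B) :
    μ⟦B | H ⊔ G₁⟧ =ᵐ[μ] μ⟦B | H⟧ := by
  have hB' := hG₂ B hB
  have hint : Integrable (B.indicator fun _ ↦ (1 : ℝ)) μ := (integrable_const 1).indicator hB'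
  refine (ae_eq_condExp_of_forall_setIntegral_eq (sup_le hH hG₁) hint
    (fun _ _ _ ↦ integrable_condExp.integrableOn) (fun s hs _ ↦ ?_)
    ((stronglyMeasurable_condExp (m := H)).mono (le_sup_left (b := G₁))).aestronglyMeasurable).symm
  refine setIntegral_eq_of_isPiSystem (sup_le hH hG₁) (sup_eq_generateFrom_image2_inter H G₁)
    (isPiSystem_image2_inter H G₁) ⟨univ, .univ, univ, .univ, inter_univ _⟩
    integrable_condExp hint ?_ hs
  rintro _ ⟨t, ht, a, ha, rfl⟩
  have ha' := hG₁ a ha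
  calc ∫ x in t ∩ a, (μ⟦B | H⟧) x ∂μ = ∫ x in t, a.indicator (μ⟦B | H⟧) x ∂μ :=
        (setIntegral_indicator ha').symm
    _ = ∫ x in t, μ[a.indicator (μ⟦B | H⟧) | H] x ∂μ :=
        (setIntegral_condExp hH (integrable_condExp.indicator ha') ht).symm
    _ = ∫ x in t, (μ⟦a | H⟧ * μ⟦B | H⟧) x ∂μ :=
        setIntegral_congr_ae (hH t ht) <|
          (condExp_indicator_mul_ae_eq ha' stronglyMeasurable_condExp integrable_condExp).mono
            fun _ hx _ ↦ hx
    _ = ∫ x in t, (μ⟦a ∩ B | H⟧) x ∂μ :=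
        setIntegral_congr_ae (hH t ht) <|
          ((condIndep_iff H G₁ G₂ hH hG₁ hG₂ μ).1 h a B ha hB).mono fun _ hx _ ↦ hx.symm
    _ = ∫ x in t, (a ∩ B).indicator (fun _ ↦ (1 : ℝ)) x ∂μ :=
        setIntegral_condExp hH ((integrable_const 1).indicator (ha'.inter hB')) ht
    _ = ∫ x in t ∩ a, B.indicator (fun _ ↦ (1 : ℝ)) x ∂μ := by
        rw [← indicator_indicator, setIntegral_indicator ha']

lemma condIndep_of_forall_condExp_indicator_sup_ae_eq {H G₁ G₂ : MeasurableSpace Ω}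
    (hH : H ≤ mΩ) (hG₁ : G₁ ≤ mΩ) (hG₂ : G₂ ≤ mΩ)
    (h : ∀ B, MeasurableSet[G₂] B → μ⟦B | H ⊔ G₁⟧ =ᵐ[μ] μ⟦B | H⟧) :
    CondIndep H G₁ G₂ hH μ := by
  rw [condIndep_iff H G₁ G₂ hH hG₁ hG₂]
  intro A B hA hB
  have hint : Integrable (B.indicator fun _ ↦ (1 : ℝ)) μ :=
    (integrable_const 1).indicator (hG₂ B hB)
  calc μ⟦A ∩ B | H⟧ = μ[A.indicator (B.indicator fun _ ↦ (1 : ℝ)) | H] := by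
        rw [indicator_indicator]
    _ =ᵐ[μ] μ[μ[A.indicator (B.indicator fun _ ↦ (1 : ℝ)) | H ⊔ G₁] | H] :=
        (condExp_condExp_of_le le_sup_left (sup_le hH hG₁)).symm
    _ =ᵐ[μ] μ[A.indicator (μ⟦B | H ⊔ G₁⟧) | H] :=
        condExp_congr_ae (condExp_indicator hint (le_sup_right (a := H) A hA))
    _ =ᵐ[μ] μ[A.indicator (μ⟦B | H⟧) | H] := condExp_congr_ae <| by
        filter_upwards [h B hB] with x hx
        by_cases hxA : x ∈ A <;> simp [hxA, hx]
    _ =ᵐ[μ] μ⟦A | H⟧ * μ⟦B | H⟧ :=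
        condExp_indicator_mul_ae_eq (hG₁ A hA) stronglyMeasurable_condExp integrable_condExp

lemma condIndep_iff_forall_condExp_indicator_sup_ae_eq {H G₁ G₂ : MeasurableSpace Ω}
    (hH : H ≤ mΩ) (hG₁ : G₁ ≤ mΩ) (hG₂ : G₂ ≤ mΩ) :
    CondIndep H G₁ G₂ hH μ ↔ ∀ B, MeasurableSet[G₂] B → μ⟦B | H ⊔ G₁⟧ =ᵐ[μ] μ⟦B | H⟧ :=
  ⟨fun h _ hB ↦ h.condExp_indicator_sup_ae_eq hH hG₁ hG₂ hB,
    condIndep_of_forall_condExp_indicator_sup_ae_eq hH hG₁ hG₂⟩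

end ProbabilityTheory

/-- Partial upwards monotonicity of conditional independence in the conditioning σ-field. -/
theorem condIndep_sup_of_le {Ω : Type*} {mΩ : MeasurableSpace Ω} [StandardBorelSpace Ω]
    (μ : Measure Ω) [IsProbabilityMeasure μ]
    (G₁ G₂ G₁' H : MeasurableSpace Ω) (hG₁ : G₁ ≤ mΩ) (hG₂ : G₂ ≤ mΩ) (hH : H ≤ mΩ)
    (hsub : G₁' ≤ G₁)
    (h : CondIndep H G₁ G₂ hH μ) :
    CondIndep (H ⊔ G₁') G₁ G₂ (sup_le hH (hsub.trans hG₁)) μ := by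
  rw [condIndep_iff_forall_condExp_indicator_sup_ae_eq hH hG₁ hG₂] at h
  rw [condIndep_iff_forall_condExp_indicator_sup_ae_eq _ hG₁ hG₂, sup_assoc, sup_eq_right.2 hsub]
  intro B hB
  have h_mid : μ⟦B | H ⊔ G₁'⟧ =ᵐ[μ] μ⟦B | H⟧ :=
    condExp_ae_eq_of_le_of_le le_sup_left (sup_le_sup_left hsub H) (sup_le hH hG₁) (h B hB)
  exact (h B hB).trans h_mid.symm
end

section
/- Let α ∈ (0,1) and let f₁ : ℝ → (0, ∞) be a bounded continuous probability density with f₁(x)·|x|^{1+α} → c_± > 0 as x → ±∞, and set f_t(x) = f₁(x t^{-1/α}) t^{-1/α}. Define q_t(x, y) = f_{e^t - 1}(y e^{t/α} - x) e^{t/α} for t > 0. Then for every x ≠ 0 and λ > 0, the integral v_λ(x,x) = ∫₀^∞ q_t(x,x) e^{-λ t} dt is finite, while v_λ(0,0) = ∞. -/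
/-!
With `a = 1 - e^{-t}` the transition density is
`q_t(x, y) = f₁((y - x e^{-t/α}) a^{-1/α}) a^{-1/α}`.
At `x = y = 0` this is `f₁(0) a^{-1/α} ≥ f₁(0) t^{-1/α}`, which is not integrable at `0`
because `1/α > 1`. For `x ≠ 0` the argument of `f₁` has modulus at least `|x| a^{1 - 1/α}`
(as `1 - e^{-t/α} ≥ a`), so the tail bound `f₁(y) ≤ D |y|^{-1-α}` gives
`q_t(x, x) ≤ D |x|^{-1-α} a^{-α} ≤ D |x|^{-1-α} (1 + t^{-α})`, which is integrable against
`e^{-λt}` on `(0, ∞)` because `α < 1`.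
-/

open MeasureTheory Filter Set Real

open scoped Topology

noncomputable def stableDensity (f₁ : ℝ → ℝ) (α s z : ℝ) : ℝ :=
  f₁ (z * s ^ (-(1:ℝ) / α)) * s ^ (-(1:ℝ) / α)

noncomputable def ouDensity (f₁ : ℝ → ℝ) (α t x y : ℝ) : ℝ :=
  stableDensity f₁ α (exp t - 1) (y * exp (t / α) - x) * exp (t / α)

noncomputable def ouResolvent (f₁ : ℝ → ℝ) (α lam x y : ℝ) : ENNReal :=
  ∫⁻ t in Ioi 0, ENNReal.ofReal (ouDensity f₁ α t x y * exp (-lam * t))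

theorem ouDensity_eq (f₁ : ℝ → ℝ) (α : ℝ) {t : ℝ} (ht : 0 < t) (x y : ℝ) :
    ouDensity f₁ α t x y =
      f₁ ((y - x * exp (-(t / α))) * (1 - exp (-t)) ^ (-(1:ℝ) / α)) *
        (1 - exp (-t)) ^ (-(1:ℝ) / α) := by
  have hscale : (exp t - 1) ^ (-(1:ℝ) / α) * exp (t / α) = (1 - exp (-t)) ^ (-(1:ℝ) / α) := by
    have h1 : 0 ≤ 1 - exp (-t) := by linarith [exp_le_one_iff.2 (neg_nonpos.2 ht.le)]
    rw [show exp t - 1 = exp t * (1 - exp (-t)) by rw [mul_sub, ← exp_add]; simp,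
      mul_rpow (exp_pos t).le h1, ← exp_mul, mul_right_comm, ← exp_add]
    field_simp
    simp
  have hinv : exp (t / α) * exp (-(t / α)) = 1 := by rw [← exp_add]; simp
  rw [ouDensity, stableDensity, mul_assoc, hscale]
  congr 2
  rw [← hscale]
  linear_combination (x * (exp t - 1) ^ (-(1:ℝ) / α)) * hinv

theorem exists_mul_abs_rpow_le_of_tendsto {f : ℝ → ℝ} {q a b : ℝ} (hq : 0 ≤ q)
    (hbdd : ∃ M, ∀ x, f x ≤ M) (htop : Tendsto (fun x => f x * |x| ^ q) atTop (𝓝 a))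
    (hbot : Tendsto (fun x => f x * |x| ^ q) atBot (𝓝 b)) :
    ∃ D, 0 ≤ D ∧ ∀ y, f y * |y| ^ q ≤ D := by
  obtain ⟨M, hM⟩ := hbdd
  obtain ⟨A, hA⟩ := eventually_atTop.1 (htop.eventually_le_const (lt_add_one a))
  obtain ⟨B, hB⟩ := eventually_atBot.1 (hbot.eventually_le_const (lt_add_one b))
  have hmid : ∀ y, B < y → y < A → f y * |y| ^ q ≤ max M 0 * max |A| |B| ^ q :=
    fun y hBy hyA => by
      have hy : |y| ≤ max |A| |B| := by rw [max_comm]; exact abs_le_max_abs_abs hBy.le hyA.le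
      calc f y * |y| ^ q ≤ max M 0 * |y| ^ q := by gcongr; exact (hM y).trans (le_max_left _ _)
        _ ≤ max M 0 * max |A| |B| ^ q := by gcongr
  refine ⟨max (max (a + 1) (b + 1)) (max M 0 * max |A| |B| ^ q),
    le_max_of_le_right (by positivity), fun y => ?_⟩
  rcases le_or_gt A y with hAy | hyA
  · exact (hA y hAy).trans ((le_max_left _ _).trans (le_max_left _ _))
  rcases le_or_gt y B with hyB | hBy
  · exact (hB y hyB).trans ((le_max_right _ _).trans (le_max_left _ _))
  exact (hmid y hBy hyA).trans (le_max_right _ _)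

theorem ouDensity_self_le {f : ℝ → ℝ} {α D x t : ℝ} (hα0 : 0 < α) (hα1 : α ≤ 1) (hD0 : 0 ≤ D)
    (hD : ∀ y, f y * |y| ^ (1 + α) ≤ D) (hx : x ≠ 0) (ht : 0 < t) :
    ouDensity f α t x x ≤ D * |x| ^ (-(1 + α)) * (1 - exp (-t)) ^ (-α) := by
  rw [ouDensity_eq f α ht]
  set a := 1 - exp (-t)
  set p := -(1:ℝ) / α
  set u := (x - x * exp (-(t / α))) * a ^ p
  have ha : 0 < a := sub_pos.2 (exp_lt_one_iff.2 (neg_neg_of_pos ht))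
  have hab : a ≤ 1 - exp (-(t / α)) := by
    gcongr 1 - exp ?_
    exact neg_le_neg (le_div_self ht.le hα0 hα1)
  have hu : |x| * a ^ (1 + p) ≤ |u| := by
    rw [show u = x * (1 - exp (-(t / α))) * a ^ p by ring, abs_mul, abs_mul,
      abs_of_pos (rpow_pos_of_pos ha p), abs_of_pos (ha.trans_le hab), rpow_add ha, rpow_one,
      mul_assoc]
    gcongr
  have hL : 0 < |x| * a ^ (1 + p) := by positivity
  have hfu : f u ≤ D * (|x| * a ^ (1 + p)) ^ (-(1 + α)) :=
    calc f u ≤ D * |u| ^ (-(1 + α)) := by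
          rw [rpow_neg (abs_nonneg u), ← div_eq_mul_inv,
            le_div_iff₀ (rpow_pos_of_pos (hL.trans_le hu) _)]
          exact hD u
      _ ≤ D * (|x| * a ^ (1 + p)) ^ (-(1 + α)) := by
          exact mul_le_mul_of_nonneg_left (rpow_le_rpow_of_nonpos hL hu (by linarith)) hD0
  calc f u * a ^ p ≤ D * (|x| * a ^ (1 + p)) ^ (-(1 + α)) * a ^ p := by gcongr
    _ = D * |x| ^ (-(1 + α)) * a ^ (-α) := by
      have hexp : (1 + p) * -(1 + α) + p = -α := by simp only [p]; field_simp; ring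
      rw [mul_rpow (abs_nonneg x) (rpow_nonneg ha.le _), ← rpow_mul ha.le, mul_assoc, mul_assoc,
        ← rpow_add ha, hexp, mul_assoc]

theorem one_sub_exp_neg_rpow_neg_le {α t : ℝ} (hα0 : 0 ≤ α) (hα1 : α ≤ 1) (ht : 0 < t) :
    (1 - exp (-t)) ^ (-α) ≤ 1 + t ^ (-α) := by
  have hlow : t / (1 + t) ≤ 1 - exp (-t) := by
    have h := (add_comm t 1 ▸ add_one_le_exp t :)
    rw [exp_neg, le_sub_comm, show 1 - t / (1 + t) = (1 + t)⁻¹ by field_simp; ring]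
    exact inv_anti₀ (by positivity) h
  calc (1 - exp (-t)) ^ (-α) ≤ (t / (1 + t)) ^ (-α) :=
        rpow_le_rpow_of_nonpos (by positivity) hlow (by linarith)
    _ = (1 + t⁻¹) ^ α := by
        rw [rpow_neg (by positivity), ← inv_rpow (by positivity), inv_div, add_div,
          div_self ht.ne', one_div, add_comm]
    _ ≤ 1 ^ α + t⁻¹ ^ α := rpow_add_le_add_rpow zero_le_one (by positivity) hα0 hα1
    _ = 1 + t ^ (-α) := by rw [one_rpow, inv_rpow ht.le, rpow_neg ht.le]

theorem integrableOn_one_add_rpow_neg_mul_exp {α lam : ℝ} (hα : α < 1) (hlam : 0 < lam) :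
    IntegrableOn (fun t => (1 + t ^ (-α)) * exp (-lam * t)) (Ioi 0) := by
  have hpow : IntegrableOn (fun t : ℝ => t ^ (-α) * exp (-lam * t)) (Ioi 0) := by
    simpa only [rpow_one] using
      integrableOn_rpow_mul_exp_neg_mul_rpow (p := 1) (by linarith) one_pos hlam
  refine ((exp_neg_integrableOn_Ioi 0 hlam).add hpow).congr_fun (fun t _ => ?_) measurableSet_Ioi
  simp only [Pi.add_apply]
  ring

theorem ouResolvent_self_ne_top {f : ℝ → ℝ} {α D x lam : ℝ} (hα0 : 0 < α) (hα1 : α < 1)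
    (hD0 : 0 ≤ D) (hD : ∀ y, f y * |y| ^ (1 + α) ≤ D) (hx : x ≠ 0) (hlam : 0 < lam) :
    ouResolvent f α lam x x ≠ ⊤ := by
  have hbound : ∀ t ∈ Ioi (0:ℝ), ouDensity f α t x x * exp (-lam * t) ≤
      D * |x| ^ (-(1 + α)) * ((1 + t ^ (-α)) * exp (-lam * t)) := fun t ht => by
    rw [← mul_assoc]
    gcongr
    exact (ouDensity_self_le hα0 hα1.le hD0 hD hx ht).trans
      (by gcongr; exact one_sub_exp_neg_rpow_neg_le hα0.le hα1.le ht)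
  have hint : IntegrableOn (fun t => D * |x| ^ (-(1 + α)) * ((1 + t ^ (-α)) * exp (-lam * t)))
      (Ioi 0) := (integrableOn_one_add_rpow_neg_mul_exp hα1 hlam).const_mul _
  refine ne_top_of_le_ne_top hint.setLIntegral_lt_top.ne ?_
  exact setLIntegral_mono' measurableSet_Ioi fun t ht => ENNReal.ofReal_le_ofReal (hbound t ht)

theorem lintegral_rpow_Ioo_zero_one_eq_top {p : ℝ} (hp : p ≤ -1) :
    ∫⁻ t in Ioo (0:ℝ) 1, ENNReal.ofReal (t ^ p) = ⊤ := by
  by_contra hfin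
  have hint : IntegrableOn (fun t : ℝ => t ^ p) (Ioo 0 1) := by
    refine (lintegral_ofReal_ne_top_iff_integrable
      (measurable_id.pow_const p).aestronglyMeasurable ?_).1 hfin
    filter_upwards [ae_restrict_mem measurableSet_Ioo] with t ht
    exact rpow_nonneg ht.1.le _
  rw [intervalIntegral.integrableOn_Ioo_rpow_iff zero_lt_one] at hint
  linarith

theorem ouResolvent_zero_eq_top {f : ℝ → ℝ} {α : ℝ} (hα0 : 0 < α) (hα1 : α ≤ 1) (hf : 0 < f 0)
    (lam : ℝ) : ouResolvent f α lam 0 0 = ⊤ := by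
  set c := f 0 * exp (-|lam|)
  have hbound : ∀ t ∈ Ioo (0:ℝ) 1,
      c * t ^ (-(1:ℝ) / α) ≤ ouDensity f α t 0 0 * exp (-lam * t) := fun t ht => by
    have ha : 0 < 1 - exp (-t) := sub_pos.2 (exp_lt_one_iff.2 (neg_neg_of_pos ht.1))
    have hpow : t ^ (-(1:ℝ) / α) ≤ (1 - exp (-t)) ^ (-(1:ℝ) / α) :=
      rpow_le_rpow_of_nonpos ha (by linarith [add_one_le_exp (-t)])
        (div_nonpos_of_nonpos_of_nonneg (by norm_num) hα0.le)
    have hexp : exp (-|lam|) ≤ exp (-lam * t) :=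
      exp_le_exp.2 (by nlinarith [le_abs_self lam, abs_nonneg lam, ht.1, ht.2])
    rw [ouDensity_eq f α ht.1]
    simp only [zero_mul, sub_zero]
    calc c * t ^ (-(1:ℝ) / α) = f 0 * t ^ (-(1:ℝ) / α) * exp (-|lam|) := by ring
      _ ≤ f 0 * (1 - exp (-t)) ^ (-(1:ℝ) / α) * exp (-lam * t) := by gcongr
  have hp : -(1:ℝ) / α ≤ -1 := by
    rw [neg_div, neg_le_neg_iff, le_div_iff₀ hα0, one_mul]; exact hα1
  rw [eq_top_iff]
  calc ⊤ = ∫⁻ t in Ioo (0:ℝ) 1, ENNReal.ofReal (c * t ^ (-(1:ℝ) / α)) := by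
        simp_rw [ENNReal.ofReal_mul (by positivity : 0 ≤ c)]
        rw [lintegral_const_mul' _ _ ENNReal.ofReal_ne_top, lintegral_rpow_Ioo_zero_one_eq_top hp,
          ENNReal.mul_top (by simp [c]; positivity)]
    _ ≤ ∫⁻ t in Ioo (0:ℝ) 1, ENNReal.ofReal (ouDensity f α t 0 0 * exp (-lam * t)) :=
        setLIntegral_mono' measurableSet_Ioo fun t ht => ENNReal.ofReal_le_ofReal (hbound t ht)
    _ ≤ ouResolvent f α lam 0 0 := lintegral_mono_set Ioo_subset_Ioi_self

theorem stable_OU_resolvent_density_general (α : ℝ) (hα : α ∈ Set.Ioo (0:ℝ) 1)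
    (f₁ : ℝ → ℝ) (hpos : ∀ x, 0 < f₁ x)
    (hbdd : ∃ M, ∀ x, f₁ x ≤ M)
    (cplus cminus : ℝ)
    (htail_plus : Filter.Tendsto (fun x => f₁ x * |x| ^ (1 + α)) Filter.atTop (nhds cplus))
    (htail_minus : Filter.Tendsto (fun x => f₁ x * |x| ^ (1 + α)) Filter.atBot (nhds cminus))
    (lam : ℝ) (hlam : 0 < lam) :
    (∀ x : ℝ, x ≠ 0 →
      (∫⁻ t in Set.Ioi (0:ℝ),
        ENNReal.ofReal ((f₁ ((x * Real.exp (t / α) - x) * (Real.exp t - 1) ^ (-(1:ℝ) / α))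
            * (Real.exp t - 1) ^ (-(1:ℝ) / α) * Real.exp (t / α)) * Real.exp (-lam * t)))
        ≠ ⊤) ∧
    (∫⁻ t in Set.Ioi (0:ℝ),
        ENNReal.ofReal ((f₁ 0 * (Real.exp t - 1) ^ (-(1:ℝ) / α) * Real.exp (t / α))
          * Real.exp (-lam * t)))
      = ⊤ := by
  obtain ⟨hα0, hα1⟩ := hα
  obtain ⟨D, hD0, hD⟩ :=
    exists_mul_abs_rpow_le_of_tendsto (by linarith) hbdd htail_plus htail_minus
  refine ⟨fun x hx => ouResolvent_self_ne_top hα0 hα1 hD0 hD hx hlam, ?_⟩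
  simpa only [ouResolvent, ouDensity, stableDensity, zero_mul, sub_zero] using
    ouResolvent_zero_eq_top hα0 hα1.le (hpos 0) lam

/-- Resolvent density of the stable Ornstein–Uhlenbeck process: finite off `0`, infinite at `0`,
for `α ∈ (0,1)` and a stable density `f₁` with jumps of both signs (heavy tails on both sides). -/
theorem stable_OU_resolvent_density (α : ℝ) (hα : α ∈ Set.Ioo (0:ℝ) 1)
    (f₁ : ℝ → ℝ) (hcont : Continuous f₁) (hpos : ∀ x, 0 < f₁ x)
    (hbdd : ∃ M, ∀ x, f₁ x ≤ M)
    (cplus cminus : ℝ) (hcp : 0 < cplus) (hcm : 0 < cminus)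
    (htail_plus : Filter.Tendsto (fun x => f₁ x * |x| ^ (1 + α)) Filter.atTop (nhds cplus))
    (htail_minus : Filter.Tendsto (fun x => f₁ x * |x| ^ (1 + α)) Filter.atBot (nhds cminus))
    (lam : ℝ) (hlam : 0 < lam) :
    (∀ x : ℝ, x ≠ 0 →
      (∫⁻ t in Set.Ioi (0:ℝ),
        ENNReal.ofReal ((f₁ ((x * Real.exp (t / α) - x) * (Real.exp t - 1) ^ (-(1:ℝ) / α))
            * (Real.exp t - 1) ^ (-(1:ℝ) / α) * Real.exp (t / α)) * Real.exp (-lam * t)))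
        ≠ ⊤) ∧
    (∫⁻ t in Set.Ioi (0:ℝ),
        ENNReal.ofReal ((f₁ 0 * (Real.exp t - 1) ^ (-(1:ℝ) / α) * Real.exp (t / α))
          * Real.exp (-lam * t)))
      = ⊤ :=
  stable_OU_resolvent_density_general α hα f₁ hpos hbdd cplus cminus htail_plus htail_minus lam hlam
end
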